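/- Let i be an even integer with 4 ≤ i ≤ g, and set y = a_1∧b_1∧a_g∧b_g∧a_2∧a_3∧⋯∧a_{i−2}∧a_{g−1} ∈ ⋀^{i+2} H. Then C_i(C_{i+2}(y)) = 2·a_2∧a_3∧⋯∧a_{i−2}∧a_{g−1}, which is nonzero, and C_{i−2}(C_i(C_{i+2}(y))) = 0; that is, y lies in the kernel of C_{i−2} ∘ C_i ∘ C_{i+2} but not in the kernel of C_i ∘ C_{i+2}. -/

import Mathlib

/-- The `2g`-dimensional rational vector space `H = ℚ^{2g}`, with basis indexed by
`Fin g ⊕ Fin g`: `Sum.inl j` corresponds to `a_{j+1}` and `Sum.inr j` to `b_{j+1}`. -/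
abbrev HH (g : ℕ) : Type := (Fin g ⊕ Fin g) → ℚ

/-- The basis vector `a_{j+1}` of `H`. -/
def aa (g : ℕ) (j : Fin g) : HH g := Pi.single (Sum.inl j) 1

/-- The basis vector `b_{j+1}` of `H`. -/
def bb (g : ℕ) (j : Fin g) : HH g := Pi.single (Sum.inr j) 1

/-- The standard symplectic form `ω` on `H`. -/
def omg (g : ℕ) (x y : HH g) : ℚ :=
  ∑ j : Fin g, (x (Sum.inl j) * y (Sum.inr j) - x (Sum.inr j) * y (Sum.inl j))

/-- The wedge `x_1 ∧ ⋯ ∧ x_k`, as an element of the `k`-th exterior power `⋀^k H`. -/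
noncomputable def wedge (g k : ℕ) (v : Fin k → HH g) : ⋀[ℚ]^k (HH g) :=
  ⟨ExteriorAlgebra.ιMulti ℚ k v, ExteriorAlgebra.ιMulti_range ℚ k (Set.mem_range_self v)⟩

/-- Given a `k`-tuple `v` and indices `j < l`, the `(k-2)`-tuple obtained from `v` by
omitting the entries at positions `j` and `l`. -/
def remove2 {α : Type*} {k : ℕ} (v : Fin k → α) (j l : Fin k) : Fin (k - 2) → α :=
  fun t => v ⟨if (t : ℕ) < (j : ℕ) then (t : ℕ)
      else if (t : ℕ) + 1 < (l : ℕ) then (t : ℕ) + 1 else (t : ℕ) + 2, by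
    have ht := t.isLt
    have hl := l.isLt
    split_ifs <;> omega⟩

/-- The value `F(x_1, …, x_k) = Σ_{j<l} (-1)^{j+l+1} ω(x_j, x_l) ·
x_1 ∧ ⋯ ∧ x̂_j ∧ ⋯ ∧ x̂_l ∧ ⋯ ∧ x_k ∈ ⋀^{k-2} H`. (Indices are 0-based here, which
yields the same signs as the 1-based formula.) -/
noncomputable def contractExpr (g k : ℕ) (v : Fin k → HH g) : ⋀[ℚ]^(k - 2) (HH g) :=
  ∑ p ∈ Finset.univ.filter (fun p : Fin k × Fin k => (p.1 : ℕ) < (p.2 : ℕ)),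
    ((-1 : ℚ) ^ ((p.1 : ℕ) + (p.2 : ℕ) + 1) * omg g (v p.1) (v p.2)) •
      wedge g (k - 2) (remove2 v p.1 p.2)

/-- `IsContraction g k C` says that `C : ⋀^k H → ⋀^{k-2} H` is the contraction `C_k`,
i.e. the (unique) linear map satisfying the defining formula on wedges. -/
def IsContraction (g k : ℕ) (C : ⋀[ℚ]^k (HH g) →ₗ[ℚ] ⋀[ℚ]^(k - 2) (HH g)) : Prop :=
  ∀ v : Fin k → HH g, C (wedge g k v) = contractExpr g k v

lemma mapAlg_mem (g k : ℕ) (S : HH g →ₗ[ℚ] HH g) {x : ExteriorAlgebra ℚ (HH g)}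
    (hx : x ∈ ⋀[ℚ]^k (HH g)) : ExteriorAlgebra.map S x ∈ ⋀[ℚ]^k (HH g) := by
  rw [← ExteriorAlgebra.ιMulti_span_fixedDegree] at hx ⊢
  have h : Submodule.map (ExteriorAlgebra.map S).toLinearMap
      (Submodule.span ℚ (Set.range (ExteriorAlgebra.ιMulti ℚ k))) ≤
      Submodule.span ℚ (Set.range (ExteriorAlgebra.ιMulti ℚ k (M := HH g))) := by
    rw [Submodule.map_span, Submodule.span_le]
    rintro _ ⟨_, ⟨v, rfl⟩, rfl⟩
    exact Submodule.subset_span ⟨S ∘ v, (ExteriorAlgebra.map_apply_ιMulti S v).symm⟩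
  exact h (Submodule.mem_map_of_mem hx)

/-- The linear map `⋀^k S : ⋀^k H → ⋀^k H` induced by a linear map `S : H → H`. -/
noncomputable def powMap (g k : ℕ) (S : HH g →ₗ[ℚ] HH g) :
    ⋀[ℚ]^k (HH g) →ₗ[ℚ] ⋀[ℚ]^k (HH g) :=
  (ExteriorAlgebra.map S).toLinearMap.restrict fun _ hx => mapAlg_mem g k S hx

/-! In each wedge that arises, `ω` pairs only factors forming a couple `(a_j, b_j)`, so each
contraction reduces to a sum over those couples. The factors of `y` contain exactly two couples, `(a_1, b_1)` and
`(a_g, b_g)`, in adjacent positions, so both signs are `+1`; removing the couples in either order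
leaves the isotropic wedge `a_2 ∧ ⋯ ∧ a_{i-2} ∧ a_{g-1}`, which gives the factor `2`, and a third
contraction kills it. It is nonzero because its factors are distinct basis vectors. -/

theorem exteriorPower.ιMulti_ne_zero_of_linearIndependent {K E : Type*} [Field K]
    [AddCommGroup E] [Module K E] {n : ℕ} {v : Fin n → E} (hv : LinearIndependent K v) :
    exteriorPower.ιMulti K n v ≠ 0 := by
  simpa [exteriorPower.ιMulti_family] using
    (exteriorPower.ιMulti_family_linearIndependent_field (n := n) hv).ne_zero
      (Set.powersetCard.ofFinEmbEquiv (OrderIso.refl (Fin n)).toOrderEmbedding)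

section Symplectic

variable {g : ℕ}

@[simp]
lemma omg_aa_aa (j k : Fin g) : omg g (aa g j) (aa g k) = 0 := by
  simp [omg, aa, Pi.single_apply]

@[simp]
lemma omg_bb_bb (j k : Fin g) : omg g (bb g j) (bb g k) = 0 := by
  simp [omg, bb, Pi.single_apply]

@[simp]
lemma omg_aa_bb (j k : Fin g) : omg g (aa g j) (bb g k) = if j = k then 1 else 0 := by
  simp [omg, aa, bb, Pi.single_apply, eq_comm, apply_ite]

@[simp]
lemma omg_bb_aa (j k : Fin g) : omg g (bb g j) (aa g k) = if j = k then -1 else 0 := by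
  simp [omg, aa, bb, Pi.single_apply, eq_comm, apply_ite]

end Symplectic

section Contraction

variable {g k : ℕ}

lemma wedge_eq_ιMulti (v : Fin k → HH g) : wedge g k v = exteriorPower.ιMulti ℚ k v := rfl

lemma contractExpr_eq_sum_of_omg_eq_zero (v : Fin k → HH g) (S : Finset (Fin k × Fin k))
    (hS : ∀ p ∈ S, (p.1 : ℕ) < p.2)
    (hv : ∀ p : Fin k × Fin k, (p.1 : ℕ) < p.2 → p ∉ S → omg g (v p.1) (v p.2) = 0) :
    contractExpr g k v = ∑ p ∈ S, ((-1 : ℚ) ^ ((p.1 : ℕ) + (p.2 : ℕ) + 1) *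
      omg g (v p.1) (v p.2)) • wedge g (k - 2) (remove2 v p.1 p.2) := by
  refine (Finset.sum_subset (fun p hp => Finset.mem_filter.mpr ⟨Finset.mem_univ p, hS p hp⟩)
    fun p hp hpS => ?_).symm
  rw [hv p (Finset.mem_filter.mp hp).2 hpS, mul_zero, zero_smul]

lemma contractExpr_eq_zero_of_omg_eq_zero (v : Fin k → HH g)
    (hv : ∀ p q, omg g (v p) (v q) = 0) : contractExpr g k v = 0 :=
  Finset.sum_eq_zero fun p _ => by rw [hv, mul_zero, zero_smul]

lemma contractExpr_eq_of_omg_eq_zero_off_zero_one (hk : 2 ≤ k) (v : Fin k → HH g)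
    (hv : ∀ p q : Fin k, (p : ℕ) < q → ¬((p : ℕ) = 0 ∧ (q : ℕ) = 1) → omg g (v p) (v q) = 0) :
    contractExpr g k v = omg g (v ⟨0, by omega⟩) (v ⟨1, by omega⟩) •
      wedge g (k - 2) (remove2 v ⟨0, by omega⟩ ⟨1, by omega⟩) := by
  rw [contractExpr_eq_sum_of_omg_eq_zero v {(⟨0, by omega⟩, ⟨1, by omega⟩)} ?_ ?_]
  · simp
  · simp
  · rintro ⟨p, q⟩ hpq hS
    exact hv p q hpq fun h => hS (by simp [Prod.ext_iff, Fin.ext_iff, h.1, h.2])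

lemma contractExpr_eq_of_omg_eq_zero_off_zero_one_two_three (hk : 4 ≤ k) (v : Fin k → HH g)
    (hv : ∀ p q : Fin k, (p : ℕ) < q → ¬((p : ℕ) = 0 ∧ (q : ℕ) = 1) →
      ¬((p : ℕ) = 2 ∧ (q : ℕ) = 3) → omg g (v p) (v q) = 0) :
    contractExpr g k v =
      omg g (v ⟨0, by omega⟩) (v ⟨1, by omega⟩) •
        wedge g (k - 2) (remove2 v ⟨0, by omega⟩ ⟨1, by omega⟩) +
      omg g (v ⟨2, by omega⟩) (v ⟨3, by omega⟩) •
        wedge g (k - 2) (remove2 v ⟨2, by omega⟩ ⟨3, by omega⟩) := by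
  rw [contractExpr_eq_sum_of_omg_eq_zero v
    {(⟨0, by omega⟩, ⟨1, by omega⟩), (⟨2, by omega⟩, ⟨3, by omega⟩)} ?_ ?_]
  · rw [Finset.sum_pair (by simp [Prod.ext_iff, Fin.ext_iff])]
    norm_num
  · simp
  · rintro ⟨p, q⟩ hpq hS
    refine hv p q hpq (fun h => hS ?_) (fun h => hS ?_) <;>
      simp [Prod.ext_iff, Fin.ext_iff, h.1, h.2]

end Contraction

lemma remove2_apply_of_eq_zero_one {α : Type*} {k : ℕ} (v : Fin k → α) {j l : Fin k}
    (hj : (j : ℕ) = 0) (hl : (l : ℕ) = 1) (t : Fin (k - 2)) :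
    remove2 v j l t = v ⟨t + 2, by omega⟩ := by
  simp only [remove2, hj, hl]
  congr

lemma remove2_apply_of_eq_two_three {α : Type*} {k : ℕ} (v : Fin k → α) {j l : Fin k}
    (hj : (j : ℕ) = 2) (hl : (l : ℕ) = 3) (t : Fin (k - 2)) :
    remove2 v j l t = v ⟨if (t : ℕ) < 2 then t else t + 2, by split_ifs <;> omega⟩ := by
  simp only [remove2, hj, hl]
  congr 2
  split_ifs <;> omega

lemma linearIndependent_aa (g : ℕ) : LinearIndependent ℚ (aa g) := by
  convert (Pi.basisFun ℚ (Fin g ⊕ Fin g)).linearIndependent.comp Sum.inl Sum.inl_injective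
  ext j : 1
  simp [aa]

section

variable {i g : ℕ} (hi1 : 4 ≤ i) (hi2 : i ≤ g)

-- the factors `a_1, b_1, a_g, b_g, a_2, a_3, …, a_{i-2}, a_{g-1}` of `y`
def yTuple : Fin (i + 2) → HH g := fun j =>
  if (j : ℕ) = 0 then aa g ⟨0, by omega⟩
  else if (j : ℕ) = 1 then bb g ⟨0, by omega⟩
  else if (j : ℕ) = 2 then aa g ⟨g - 1, by omega⟩
  else if (j : ℕ) = 3 then bb g ⟨g - 1, by omega⟩
  else if (j : ℕ) = i + 1 then aa g ⟨g - 2, by omega⟩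
  else aa g ⟨(j : ℕ) - 3, by have := j.isLt; omega⟩

-- `a_2, a_3, …, a_{i-2}, a_{g-1}`
def tailTuple : Fin (i - 2) → HH g := fun t =>
  if (t : ℕ) = i - 3 then aa g ⟨g - 2, by omega⟩
  else aa g ⟨(t : ℕ) + 1, by have := t.isLt; omega⟩

lemma omg_yTuple_eq_zero (p q : Fin (i + 2)) (hpq : (p : ℕ) < q)
    (h01 : ¬((p : ℕ) = 0 ∧ (q : ℕ) = 1)) (h23 : ¬((p : ℕ) = 2 ∧ (q : ℕ) = 3)) :
    omg g (yTuple hi1 hi2 p) (yTuple hi1 hi2 q) = 0 := by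
  have := q.isLt
  unfold yTuple
  split_ifs <;> simp only [omg_aa_aa, omg_bb_bb, omg_aa_bb, omg_bb_aa, Fin.mk.injEq] <;>
    split_ifs <;> first | rfl | omega

lemma yTuple_eq_tailTuple {j : Fin (i + 2)} {t : Fin (i - 2)} (hjt : (j : ℕ) = t + 4) :
    yTuple hi1 hi2 j = tailTuple hi1 hi2 t := by
  simp only [yTuple, tailTuple, hjt]
  split_ifs <;> first | rfl | contradiction | omega

lemma omg_tailTuple_eq_zero (p q : Fin (i - 2)) :
    omg g (tailTuple hi1 hi2 p) (tailTuple hi1 hi2 q) = 0 := by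
  unfold tailTuple
  split_ifs <;> exact omg_aa_aa _ _

lemma wedge_tailTuple_ne_zero : wedge g (i - 2) (tailTuple hi1 hi2) ≠ 0 := by
  have hT : tailTuple hi1 hi2 = aa g ∘ fun t : Fin (i - 2) =>
      if (t : ℕ) = i - 3 then ⟨g - 2, by omega⟩ else ⟨t + 1, by omega⟩ := by
    funext t
    simp only [tailTuple, Function.comp_apply]
    split_ifs <;> rfl
  rw [wedge_eq_ιMulti, hT]
  refine exteriorPower.ιMulti_ne_zero_of_linearIndependent
    ((linearIndependent_aa g).comp _ fun s t hst => ?_)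
  have := s.isLt
  have := t.isLt
  split_ifs at hst <;> simp only [Fin.mk.injEq] at hst <;> omega

lemma contractExpr_yTuple :
    contractExpr g (i + 2) (yTuple hi1 hi2) =
      wedge g i (remove2 (yTuple hi1 hi2) ⟨0, by omega⟩ ⟨1, by omega⟩) +
      wedge g i (remove2 (yTuple hi1 hi2) ⟨2, by omega⟩ ⟨3, by omega⟩) := by
  rw [contractExpr_eq_of_omg_eq_zero_off_zero_one_two_three (by omega) _
    (omg_yTuple_eq_zero hi1 hi2)]
  simp [yTuple]
  rfl

lemma contractExpr_remove2_zero_one_yTuple :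
    contractExpr g i (remove2 (yTuple hi1 hi2) ⟨0, by omega⟩ ⟨1, by omega⟩) =
      wedge g (i - 2) (tailTuple hi1 hi2) := by
  have hu := remove2_apply_of_eq_zero_one (yTuple hi1 hi2)
    (j := ⟨0, by omega⟩) (l := ⟨1, by omega⟩) rfl rfl
  rw [contractExpr_eq_of_omg_eq_zero_off_zero_one (by omega) _ fun p q hpq h01 => ?_]
  · have hT : remove2 (remove2 (yTuple hi1 hi2) ⟨0, by omega⟩ ⟨1, by omega⟩)
        (⟨0, by omega⟩ : Fin i) ⟨1, by omega⟩ = tailTuple hi1 hi2 := by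
      funext t
      rw [remove2_apply_of_eq_zero_one _ rfl rfl, hu]
      exact yTuple_eq_tailTuple hi1 hi2 (by simp)
    rw [hu, hu, hT]
    simp [yTuple]
  · rw [hu, hu]
    exact omg_yTuple_eq_zero hi1 hi2 _ _ (by simpa) (by simp) (by simp; omega)

lemma contractExpr_remove2_two_three_yTuple :
    contractExpr g i (remove2 (yTuple hi1 hi2) ⟨2, by omega⟩ ⟨3, by omega⟩) =
      wedge g (i - 2) (tailTuple hi1 hi2) := by
  have hu := remove2_apply_of_eq_two_three (yTuple hi1 hi2)
    (j := ⟨2, by omega⟩) (l := ⟨3, by omega⟩) rfl rfl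
  rw [contractExpr_eq_of_omg_eq_zero_off_zero_one (by omega) _ fun p q hpq h01 => ?_]
  · have hT : remove2 (remove2 (yTuple hi1 hi2) ⟨2, by omega⟩ ⟨3, by omega⟩)
        (⟨0, by omega⟩ : Fin i) ⟨1, by omega⟩ = tailTuple hi1 hi2 := by
      funext t
      rw [remove2_apply_of_eq_zero_one _ rfl rfl, hu]
      exact yTuple_eq_tailTuple hi1 hi2 (by simp)
    rw [hu, hu, hT]
    simp [yTuple]
  · rw [hu, hu]
    refine omg_yTuple_eq_zero hi1 hi2 _ _ ?_ ?_ ?_ <;> dsimp only <;> split_ifs <;> omega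

end

/-- Let `i` be even with `4 ≤ i ≤ g`, and let
`y = a_1∧b_1∧a_g∧b_g∧a_2∧a_3∧⋯∧a_{i-2}∧a_{g-1} ∈ ⋀^{i+2} H`.  Then
`C_i (C_{i+2} y) = 2 · a_2∧a_3∧⋯∧a_{i-2}∧a_{g-1}`, which is nonzero, and
`C_{i-2} (C_i (C_{i+2} y)) = 0`: `y` lies in the kernel of `C_{i-2} ∘ C_i ∘ C_{i+2}`
but not in the kernel of `C_i ∘ C_{i+2}`. -/
theorem statement8 (g : ℕ) (i : ℕ)
    (hi1 : 4 ≤ i) (hi2 : i ≤ g)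
    (C2 : ⋀[ℚ]^(i + 2) (HH g) →ₗ[ℚ] ⋀[ℚ]^(i + 2 - 2) (HH g))
    (hC2 : IsContraction g (i + 2) C2)
    (C1 : ⋀[ℚ]^i (HH g) →ₗ[ℚ] ⋀[ℚ]^(i - 2) (HH g)) (hC1 : IsContraction g i C1)
    (C0 : ⋀[ℚ]^(i - 2) (HH g) →ₗ[ℚ] ⋀[ℚ]^(i - 2 - 2) (HH g))
    (hC0 : IsContraction g (i - 2) C0) :
    C1 (C2 (wedge g (i + 2) fun j =>
        if (j : ℕ) = 0 then aa g ⟨0, by omega⟩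
        else if (j : ℕ) = 1 then bb g ⟨0, by omega⟩
        else if (j : ℕ) = 2 then aa g ⟨g - 1, by omega⟩
        else if (j : ℕ) = 3 then bb g ⟨g - 1, by omega⟩
        else if (j : ℕ) = i + 1 then aa g ⟨g - 2, by omega⟩
        else aa g ⟨(j : ℕ) - 3, by have := j.isLt; omega⟩)) =
      (2 : ℚ) • wedge g (i - 2) (fun t =>
        if (t : ℕ) = i - 3 then aa g ⟨g - 2, by omega⟩
        else aa g ⟨(t : ℕ) + 1, by have := t.isLt; omega⟩) ∧
    (2 : ℚ) • wedge g (i - 2) (fun t =>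
        if (t : ℕ) = i - 3 then aa g ⟨g - 2, by omega⟩
        else aa g ⟨(t : ℕ) + 1, by have := t.isLt; omega⟩) ≠ 0 ∧
    C0 (C1 (C2 (wedge g (i + 2) fun j =>
        if (j : ℕ) = 0 then aa g ⟨0, by omega⟩
        else if (j : ℕ) = 1 then bb g ⟨0, by omega⟩
        else if (j : ℕ) = 2 then aa g ⟨g - 1, by omega⟩
        else if (j : ℕ) = 3 then bb g ⟨g - 1, by omega⟩
        else if (j : ℕ) = i + 1 then aa g ⟨g - 2, by omega⟩
        else aa g ⟨(j : ℕ) - 3, by have := j.isLt; omega⟩))) = 0 := by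
  have hC1C2 : C1 (C2 (wedge g (i + 2) (yTuple hi1 hi2))) =
      (2 : ℚ) • wedge g (i - 2) (tailTuple hi1 hi2) := by
    rw [hC2 _, contractExpr_yTuple, map_add, hC1 _, hC1 _, contractExpr_remove2_zero_one_yTuple,
      contractExpr_remove2_two_three_yTuple, two_smul]
  have hC0C1C2 : C0 (C1 (C2 (wedge g (i + 2) (yTuple hi1 hi2)))) = 0 := by
    rw [hC1C2, map_smul, hC0 _,
      contractExpr_eq_zero_of_omg_eq_zero _ (omg_tailTuple_eq_zero hi1 hi2), smul_zero]
  exact ⟨hC1C2, smul_ne_zero two_ne_zero (wedge_tailTuple_ne_zero hi1 hi2), hC0C1C2⟩
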